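/- arXiv:1807.10173 — 2 statements merged into one kernel-verified Lean document; each statement's English description precedes it below -/
import Mathlib

section
/- Let A, Â be n×m real matrices, S an index set, and suppose the restricted eigenvalue φ(A, S) := min{‖Aδ‖₂/(√n‖δ_S‖₂) : ‖δ_{Sᶜ}‖₁ ≤ 3‖δ_S‖₁, δ_S ≠ 0} satisfies φ(A,S) ≥ φ₀ > 0. If for all δ with ‖δ_{Sᶜ}‖₁ ≤ 3‖δ_S‖₁ and δ_S ≠ 0 we have |δᵀ(ÂᵀÂ − AᵀA)δ| ≤ (φ₀²/4)·n·‖δ_S‖₂², then φ(Â, S) ≥ φ₀/2. -/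
open Matrix

lemma quad_form_eq {n m : ℕ} (M : Matrix (Fin n) (Fin m) ℝ) (δ : Fin m → ℝ) :
    δ ⬝ᵥ ((Mᵀ * M) *ᵥ δ) = ∑ i, (M *ᵥ δ) i ^ 2 := by
  rw [← mulVec_mulVec, dotProduct_mulVec, vecMul_transpose]
  simp [dotProduct, sq]

/-- Stability of the restricted eigenvalue under Gram-matrix perturbation:
if φ(A,S) ≥ φ₀ and on the cone |δᵀ(ÂᵀÂ − AᵀA)δ| ≤ (φ₀²/4) n ‖δ_S‖₂²,
then φ(Â,S) ≥ φ₀/2. -/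
theorem restricted_eigenvalue_stability {n m : ℕ}
    (A Ahat : Matrix (Fin n) (Fin m) ℝ) (S : Finset (Fin m)) (φ₀ : ℝ)
    (hφ₀ : 0 < φ₀)
    (hRE : ∀ δ : Fin m → ℝ,
      (∑ i ∈ Sᶜ, |δ i| ≤ 3 * ∑ i ∈ S, |δ i|) → (∃ i ∈ S, δ i ≠ 0) →
      φ₀ * Real.sqrt n * Real.sqrt (∑ i ∈ S, (δ i) ^ 2)
        ≤ Real.sqrt (∑ i, (A *ᵥ δ) i ^ 2))
    (hperturb : ∀ δ : Fin m → ℝ,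
      (∑ i ∈ Sᶜ, |δ i| ≤ 3 * ∑ i ∈ S, |δ i|) → (∃ i ∈ S, δ i ≠ 0) →
      |δ ⬝ᵥ ((Ahatᵀ * Ahat - Aᵀ * A) *ᵥ δ)|
        ≤ (φ₀ ^ 2 / 4) * n * ∑ i ∈ S, (δ i) ^ 2) :
    ∀ δ : Fin m → ℝ,
      (∑ i ∈ Sᶜ, |δ i| ≤ 3 * ∑ i ∈ S, |δ i|) → (∃ i ∈ S, δ i ≠ 0) →
      (φ₀ / 2) * Real.sqrt n * Real.sqrt (∑ i ∈ S, (δ i) ^ 2)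
        ≤ Real.sqrt (∑ i, (Ahat *ᵥ δ) i ^ 2) := by
  intro δ hcone hS
  have h1 := hRE δ hcone hS
  have h2 := hperturb δ hcone hS
  have hq : δ ⬝ᵥ ((Ahatᵀ * Ahat - Aᵀ * A) *ᵥ δ)
      = (∑ i, (Ahat *ᵥ δ) i ^ 2) - ∑ i, (A *ᵥ δ) i ^ 2 := by
    rw [sub_mulVec, dotProduct_sub, quad_form_eq, quad_form_eq]
  have hSnn : (0:ℝ) ≤ ∑ i ∈ S, (δ i) ^ 2 := Finset.sum_nonneg fun i _ => sq_nonneg _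
  have hAnn : (0:ℝ) ≤ ∑ i, (A *ᵥ δ) i ^ 2 := Finset.sum_nonneg fun i _ => sq_nonneg _
  have hHnn : (0:ℝ) ≤ ∑ i, (Ahat *ᵥ δ) i ^ 2 := Finset.sum_nonneg fun i _ => sq_nonneg _
  have hnnn : (0:ℝ) ≤ (n:ℝ) := Nat.cast_nonneg _
  -- square the RE inequality
  have hLnn : 0 ≤ φ₀ * Real.sqrt n * Real.sqrt (∑ i ∈ S, (δ i) ^ 2) :=
    mul_nonneg (mul_nonneg hφ₀.le (Real.sqrt_nonneg _)) (Real.sqrt_nonneg _)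
  have h1sq : φ₀ ^ 2 * n * (∑ i ∈ S, (δ i) ^ 2) ≤ ∑ i, (A *ᵥ δ) i ^ 2 := by
    have := mul_self_le_mul_self hLnn h1
    rw [Real.mul_self_sqrt hAnn] at this
    calc φ₀ ^ 2 * n * (∑ i ∈ S, (δ i) ^ 2)
        = (φ₀ * Real.sqrt n * Real.sqrt (∑ i ∈ S, (δ i) ^ 2)) *
          (φ₀ * Real.sqrt n * Real.sqrt (∑ i ∈ S, (δ i) ^ 2)) := by
          rw [show (φ₀ * Real.sqrt n * Real.sqrt (∑ i ∈ S, (δ i) ^ 2)) *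
              (φ₀ * Real.sqrt n * Real.sqrt (∑ i ∈ S, (δ i) ^ 2))
              = (φ₀ * φ₀) * (Real.sqrt n * Real.sqrt n) *
                (Real.sqrt (∑ i ∈ S, (δ i) ^ 2) * Real.sqrt (∑ i ∈ S, (δ i) ^ 2)) by ring,
            Real.mul_self_sqrt hnnn, Real.mul_self_sqrt hSnn]; ring
      _ ≤ _ := this
  have hkey : (φ₀ / 2) ^ 2 * n * (∑ i ∈ S, (δ i) ^ 2) ≤ ∑ i, (Ahat *ᵥ δ) i ^ 2 := by
    have habs := abs_le.mp h2
    rw [hq] at habs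
    nlinarith [habs.1, h1sq, mul_nonneg hnnn hSnn, sq_nonneg φ₀]
  have : (φ₀ / 2) * Real.sqrt n * Real.sqrt (∑ i ∈ S, (δ i) ^ 2)
      = Real.sqrt ((φ₀ / 2) ^ 2 * n * (∑ i ∈ S, (δ i) ^ 2)) := by
    rw [Real.sqrt_mul (by positivity), Real.sqrt_mul (by positivity),
      Real.sqrt_sq (by positivity)]
  rw [this]
  exact Real.sqrt_le_sqrt hkey
end

section
/- Let A and Â be n×m real matrices, S an index set with |S| = s, and suppose max over j₁,j₂ of |(Â_{j₁})ᵀÂ_{j₂} − (A_{j₁})ᵀA_{j₂}| ≤ g·n for some g ≥ 0, where A_j denotes the j-th column. Then for every δ ∈ ℝᵐ with ‖δ_{Sᶜ}‖₁ ≤ 3‖δ_S‖₁ and δ_S ≠ 0, |δᵀ(ÂᵀÂ − AᵀA)δ| ≤ 16·s·g·n·‖δ_S‖₂². -/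
open Matrix

/-- Columnwise Gram differences control quadratic-form perturbation on the cone. -/
theorem gram_perturbation_cone_bound {n m : ℕ}
    (A Ahat : Matrix (Fin n) (Fin m) ℝ) (S : Finset (Fin m)) (s : ℕ)
    (hcard : S.card = s) (g : ℝ) (hg : 0 ≤ g)
    (hcol : ∀ j₁ j₂ : Fin m,
      |(fun i => Ahat i j₁) ⬝ᵥ (fun i => Ahat i j₂)
        - (fun i => A i j₁) ⬝ᵥ (fun i => A i j₂)| ≤ g * n) :
    ∀ δ : Fin m → ℝ,
      (∑ i ∈ Sᶜ, |δ i| ≤ 3 * ∑ i ∈ S, |δ i|) → (∃ i ∈ S, δ i ≠ 0) →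
      |δ ⬝ᵥ ((Ahatᵀ * Ahat - Aᵀ * A) *ᵥ δ)|
        ≤ 16 * s * g * n * ∑ i ∈ S, (δ i) ^ 2 := by
  intro δ hδ _
  set M : Matrix (Fin m) (Fin m) ℝ := Ahatᵀ * Ahat - Aᵀ * A with hMdef
  have hM : ∀ j₁ j₂, |M j₁ j₂| ≤ g * n := by
    intro j₁ j₂
    have := hcol j₁ j₂
    simpa [hMdef, Matrix.sub_apply, Matrix.mul_apply, Matrix.transpose_apply,
      dotProduct] using this
  have hexp : δ ⬝ᵥ (M *ᵥ δ) = ∑ j₁, ∑ j₂, δ j₁ * M j₁ j₂ * δ j₂ := by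
    simp [dotProduct, Matrix.mulVec, dotProduct, Finset.mul_sum, mul_assoc]
  set T : ℝ := ∑ i ∈ S, |δ i| with hT
  have hTnn : 0 ≤ T := Finset.sum_nonneg fun i _ => abs_nonneg _
  have hfull : ∑ j, |δ j| ≤ 4 * T := by
    have := Finset.sum_add_sum_compl S fun i => |δ i|
    nlinarith [hδ]
  have h1 : |δ ⬝ᵥ (M *ᵥ δ)| ≤ g * n * (∑ j, |δ j|) ^ 2 := by
    rw [hexp]
    calc |∑ j₁, ∑ j₂, δ j₁ * M j₁ j₂ * δ j₂|
        ≤ ∑ j₁, ∑ j₂, |δ j₁ * M j₁ j₂ * δ j₂| := by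
          refine (Finset.abs_sum_le_sum_abs _ _).trans ?_
          exact Finset.sum_le_sum fun i _ => Finset.abs_sum_le_sum_abs _ _
      _ ≤ ∑ j₁, ∑ j₂, |δ j₁| * (g * n) * |δ j₂| := by
          refine Finset.sum_le_sum fun j₁ _ => Finset.sum_le_sum fun j₂ _ => ?_
          rw [abs_mul, abs_mul]
          have := hM j₁ j₂
          have h2 : |δ j₁| * |M j₁ j₂| ≤ |δ j₁| * (g * n) :=
            mul_le_mul_of_nonneg_left this (abs_nonneg _)
          exact mul_le_mul_of_nonneg_right h2 (abs_nonneg _)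
      _ = g * n * (∑ j, |δ j|) ^ 2 := by
          rw [sq, Finset.sum_mul_sum]
          rw [Finset.mul_sum]
          refine Finset.sum_congr rfl fun j₁ _ => ?_
          rw [Finset.mul_sum]
          exact Finset.sum_congr rfl fun j₂ _ => by ring
  have hcs : T ^ 2 ≤ (s : ℝ) * ∑ i ∈ S, (δ i) ^ 2 := by
    have := sq_sum_le_card_mul_sum_sq (s := S) (f := fun i => |δ i|)
    simpa [hcard, sq_abs, hT] using this
  have hsum2 : (∑ j, |δ j|) ^ 2 ≤ 16 * T ^ 2 := by nlinarith [Finset.sum_nonneg (s := Finset.univ) (f := fun j => |δ j|) fun i _ => abs_nonneg (δ i)]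
  have hgn : (0:ℝ) ≤ g * n := mul_nonneg hg (Nat.cast_nonneg n)
  calc |δ ⬝ᵥ (M *ᵥ δ)| ≤ g * n * (∑ j, |δ j|) ^ 2 := h1
    _ ≤ g * n * (16 * T ^ 2) := mul_le_mul_of_nonneg_left hsum2 hgn
    _ ≤ g * n * (16 * ((s : ℝ) * ∑ i ∈ S, (δ i) ^ 2)) := by
        have := mul_le_mul_of_nonneg_left hcs (by norm_num : (0:ℝ) ≤ 16)
        exact mul_le_mul_of_nonneg_left this hgn
    _ = 16 * s * g * n * ∑ i ∈ S, (δ i) ^ 2 := by ring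
end
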